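/- Let 0 < a < b, α > 0 and μ > 0 be real numbers. There exists a quadruple (c₁, c₂, c₃, c₄) ∈ ℝ⁴, not all zero, such that the function Ψ(r) = c₁ r + c₂ r ln r + c₃ r⁻¹ + c₄ r³ satisfies the four boundary conditions Ψ(a) = 0, Ψ(b) = 0, Ψ''(a) − (1/a − α/μ)Ψ'(a) = 0 and Ψ''(b) + Ψ'(b)/b = 0, if and only if μ = aα(1 + 3σ⁴ − 4σ² − 4σ⁴ ln σ)/(2(σ⁴ − 1 − 4σ⁴ ln σ)), where σ = b/a. -/

import Mathlib

/-!
Clearing denominators, the four boundary conditions on `Ψ = genSol c₁ c₂ c₃ c₄` form a linear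
system `M c = 0` whose coefficient matrix depends on the Robin coefficient `k = 1/a - α/μ` only
through its third row. A nontrivial solution exists iff `det M = 0`, and cofactor expansion
gives `det M = 4a²b² (2E - (1 - a k) F)` with `E = a⁴ - b⁴ + 4b⁴ ln(b/a)` and
`F = -a⁴ + 4a²b² - 3b⁴ + 4b⁴ ln(b/a)`. Since `1 - a k = aα/μ`, this is `μ = aαF/(2E)`, and
`E ≠ 0` because `x - 1 < x ln x` for `x = σ⁴ > 1`.
-/

/-- The general solution `Ψ(r) = c₁ r + c₂ r ln r + c₃ r⁻¹ + c₄ r³` of `Δ₁²Ψ = 0`. -/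
noncomputable def genSol (c₁ c₂ c₃ c₄ : ℝ) : ℝ → ℝ :=
  fun r => c₁ * r + c₂ * r * Real.log r + c₃ * r⁻¹ + c₄ * r ^ 3

open Real Matrix

theorem hasDerivAt_genSol (c₁ c₂ c₃ c₄ : ℝ) {r : ℝ} (hr : r ≠ 0) :
    HasDerivAt (genSol c₁ c₂ c₃ c₄)
      (c₁ + c₂ * (log r + 1) - c₃ / r ^ 2 + 3 * c₄ * r ^ 2) r := by
  have h := ((((hasDerivAt_id' r).const_mul c₁).add
    (((hasDerivAt_id' r).const_mul c₂).mul (hasDerivAt_log hr))).add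
    ((hasDerivAt_inv hr).const_mul c₃)).add ((hasDerivAt_pow 3 r).const_mul c₄)
  refine h.congr_deriv ?_
  field_simp
  ring

theorem deriv_genSol (c₁ c₂ c₃ c₄ : ℝ) {r : ℝ} (hr : r ≠ 0) :
    deriv (genSol c₁ c₂ c₃ c₄) r = c₁ + c₂ * (log r + 1) - c₃ / r ^ 2 + 3 * c₄ * r ^ 2 :=
  (hasDerivAt_genSol c₁ c₂ c₃ c₄ hr).deriv

theorem deriv_deriv_genSol (c₁ c₂ c₃ c₄ : ℝ) {r : ℝ} (hr : r ≠ 0) :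
    deriv (deriv (genSol c₁ c₂ c₃ c₄)) r = c₂ / r + 2 * c₃ / r ^ 3 + 6 * c₄ * r := by
  have hderiv : deriv (genSol c₁ c₂ c₃ c₄) =ᶠ[nhds r]
      fun x => c₁ + c₂ * (log x + 1) - c₃ / x ^ 2 + 3 * c₄ * x ^ 2 :=
    (eventually_ne_nhds hr).mono fun x hx => deriv_genSol c₁ c₂ c₃ c₄ hx
  have h := ((((hasDerivAt_log hr).add_const 1).const_mul c₂).const_add c₁).sub
    (((hasDerivAt_pow 2 r).inv (pow_ne_zero 2 hr)).const_mul c₃) |>.add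
    ((hasDerivAt_pow 2 r).const_mul (3 * c₄))
  have h' : HasDerivAt (fun x => c₁ + c₂ * (log x + 1) - c₃ / x ^ 2 + 3 * c₄ * x ^ 2)
      (c₂ / r + 2 * c₃ / r ^ 3 + 6 * c₄ * r) r := by
    refine (h.congr_deriv ?_).congr_of_eventuallyEq (.of_forall fun x => ?_)
    · field_simp
      ring
    · simp [div_eq_mul_inv]
  rw [hderiv.deriv_eq, h'.deriv]

/-- Entry `(i, j)` is the `i`-th boundary functional applied to the `j`-th of `r, r ln r, r⁻¹, r³`,
with the rows scaled by `a, b, a³, b³` respectively. -/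
noncomputable def boundaryMatrix (a b k : ℝ) : Matrix (Fin 4) (Fin 4) ℝ :=
  !![a ^ 2, a ^ 2 * log a, 1, a ^ 4;
     b ^ 2, b ^ 2 * log b, 1, b ^ 4;
     -k * a ^ 3, a ^ 2 - k * a ^ 3 * (log a + 1), 2 + k * a, 6 * a ^ 4 - 3 * k * a ^ 5;
     b ^ 2, b ^ 2 * (log b + 2), 1, 9 * b ^ 4]

theorem boundaryMatrix_mulVec (c₁ c₂ c₃ c₄ k : ℝ) {a b : ℝ} (ha : a ≠ 0) (hb : b ≠ 0) :
    boundaryMatrix a b k *ᵥ ![c₁, c₂, c₃, c₄] =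
      ![a * genSol c₁ c₂ c₃ c₄ a, b * genSol c₁ c₂ c₃ c₄ b,
        a ^ 3 * (deriv (deriv (genSol c₁ c₂ c₃ c₄)) a - k * deriv (genSol c₁ c₂ c₃ c₄) a),
        b ^ 3 * (deriv (deriv (genSol c₁ c₂ c₃ c₄)) b + deriv (genSol c₁ c₂ c₃ c₄) b / b)] := by
  simp only [deriv_deriv_genSol _ _ _ _ ha, deriv_deriv_genSol _ _ _ _ hb, deriv_genSol _ _ _ _ ha,
    deriv_genSol _ _ _ _ hb]
  ext i
  fin_cases i <;>
    simp only [mulVec, dotProduct, Fin.sum_univ_four, boundaryMatrix, genSol, of_apply, cons_val',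
      cons_val_fin_one, cons_val_zero, cons_val_one, cons_val, Fin.isValue, Fin.reduceFinMk,
      Fin.zero_eta, Fin.mk_one] <;>
    field_simp <;> ring

theorem det_boundaryMatrix (a b k : ℝ) :
    (boundaryMatrix a b k).det = 4 * a ^ 2 * b ^ 2 *
      (2 * (a ^ 4 - b ^ 4 + 4 * b ^ 4 * (log b - log a))
        - (1 - a * k) * (-a ^ 4 + 4 * a ^ 2 * b ^ 2 - 3 * b ^ 4 + 4 * b ^ 4 * (log b - log a))) := by
  rw [det_succ_row_zero]
  simp +decide only [boundaryMatrix, det_fin_three, Fin.sum_univ_succ, Fin.succAbove, of_apply,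
    submatrix_apply, cons_val, Fin.reduceSucc, Fin.reduceCastSucc, Fin.coe_ofNat_eq_mod, ↓reduceIte]
  ring

theorem exists_nontrivial_genSol_iff_det_eq_zero {a b : ℝ} (ha : a ≠ 0) (hb : b ≠ 0) (k : ℝ) :
    (∃ c₁ c₂ c₃ c₄ : ℝ, ¬(c₁ = 0 ∧ c₂ = 0 ∧ c₃ = 0 ∧ c₄ = 0) ∧
      genSol c₁ c₂ c₃ c₄ a = 0 ∧ genSol c₁ c₂ c₃ c₄ b = 0 ∧
      deriv (deriv (genSol c₁ c₂ c₃ c₄)) a - k * deriv (genSol c₁ c₂ c₃ c₄) a = 0 ∧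
      deriv (deriv (genSol c₁ c₂ c₃ c₄)) b + deriv (genSol c₁ c₂ c₃ c₄) b / b = 0) ↔
    (boundaryMatrix a b k).det = 0 := by
  rw [← exists_mulVec_eq_zero_iff]
  constructor
  · rintro ⟨c₁, c₂, c₃, c₄, hc, h₁, h₂, h₃, h₄⟩
    refine ⟨![c₁, c₂, c₃, c₄], by simpa using hc, ?_⟩
    simp [boundaryMatrix_mulVec _ _ _ _ _ ha hb, h₁, h₂, h₃, h₄]
  · rintro ⟨v, hv, hMv⟩
    have hv_eq : v = ![v 0, v 1, v 2, v 3] := by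
      ext i; fin_cases i <;> rfl
    rw [hv_eq, boundaryMatrix_mulVec _ _ _ _ _ ha hb] at hMv
    rw [hv_eq] at hv
    refine ⟨v 0, v 1, v 2, v 3, by simpa using hv, ?_⟩
    simpa [ha, hb] using hMv

theorem nontrivial_solution_iff_critical_viscosity (a b α μ : ℝ)
    (ha : 0 < a) (hab : a < b) (hμ : 0 < μ) :
    (∃ c₁ c₂ c₃ c₄ : ℝ, ¬(c₁ = 0 ∧ c₂ = 0 ∧ c₃ = 0 ∧ c₄ = 0) ∧
      genSol c₁ c₂ c₃ c₄ a = 0 ∧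
      genSol c₁ c₂ c₃ c₄ b = 0 ∧
      deriv (deriv (genSol c₁ c₂ c₃ c₄)) a
        - (1 / a - α / μ) * deriv (genSol c₁ c₂ c₃ c₄) a = 0 ∧
      deriv (deriv (genSol c₁ c₂ c₃ c₄)) b
        + deriv (genSol c₁ c₂ c₃ c₄) b / b = 0) ↔
    μ = a * α * (1 + 3 * (b / a) ^ 4 - 4 * (b / a) ^ 2 - 4 * (b / a) ^ 4 * Real.log (b / a)) /
        (2 * ((b / a) ^ 4 - 1 - 4 * (b / a) ^ 4 * Real.log (b / a))) := by
  have hb : 0 < b := ha.trans hab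
  have hden : (b / a) ^ 4 - 1 - 4 * (b / a) ^ 4 * log (b / a) < 0 := by
    have h := self_sub_one_lt_mul_log (x := (b / a) ^ 4) (by positivity)
      (one_lt_pow₀ ((one_lt_div ha).2 hab) (by norm_num)).ne'
    rw [log_pow] at h
    push_cast at h
    linarith
  rw [exists_nontrivial_genSol_iff_det_eq_zero ha.ne' hb.ne', det_boundaryMatrix,
    eq_div_iff (by linarith), mul_eq_zero, or_iff_right (by positivity), sub_eq_zero,
    log_div hb.ne' ha.ne']
  field_simp
  constructor <;> intro h <;> linear_combination -h
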